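/- If the solution manifold M ⊂ V satisfies ε(V_n) := sup_{u ∈ M} ‖u − Π_{V_n} u‖ < ∞ and β(V_n, W) > 0, then for every u ∈ M the PBDW reconstruction A(w) from w = Π_W u satisfies ‖u − A(w)‖ ≤ β(V_n, W)^{-1} ε(V_n). -/

import Mathlib

open InnerProductSpace

/-!
Let `e = u - A(w)`. It lies in `Wᗮ`, and `A(w)` minimizes `‖Π_{Vₙᗮ} ·‖` on `A(w) + Wᗮ`, so the
first-order condition `Π_{Vₙᗮ} A(w) ⟂ Π_{Vₙᗮ} e` and Pythagoras give
`‖Π_{Vₙᗮ} e‖ ≤ ‖Π_{Vₙᗮ} u‖ ≤ ε(Vₙ)`. On the other hand, for `e ∈ Wᗮ` and `v = Π_{Vₙ} e`,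
`‖v‖² = ⟪Π_{Wᗮ} v, e⟫ ≤ ‖Π_{Wᗮ} v‖ ‖e‖` and `‖Π_{Wᗮ} v‖² ≤ (1 - β²) ‖v‖²`, hence
`‖v‖² ≤ (1 - β²) ‖e‖²` and `β ‖e‖ ≤ ‖Π_{Vₙᗮ} e‖`.
-/

section FirstOrder

variable {F : Type*} [NormedAddCommGroup F] [InnerProductSpace ℝ F]

theorem inner_eq_zero_of_forall_norm_le_norm_add_smul {a b : F}
    (h : ∀ t : ℝ, ‖a‖ ≤ ‖a + t • b‖) : ⟪a, b⟫_ℝ = 0 := by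
  rcases eq_or_ne b 0 with rfl | hb
  · exact inner_zero_right a
  have key := h (-⟪a, b⟫_ℝ / ‖b‖ ^ 2)
  rw [← pow_le_pow_iff_left₀ (norm_nonneg _) (norm_nonneg _) two_ne_zero, norm_add_sq_real,
    norm_smul, real_inner_smul_right, mul_pow, Real.norm_eq_abs, sq_abs] at key
  field_simp at key
  nlinarith [sq_nonneg ⟪a, b⟫_ℝ]

theorem norm_map_le_norm_map_add_of_forall_norm_map_le_add_smul {E 𝓕 : Type*} [AddCommGroup E]
    [Module ℝ E] [FunLike 𝓕 E F] [LinearMapClass 𝓕 ℝ E F] (T : 𝓕) {x e : E}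
    (hmin : ∀ t : ℝ, ‖T x‖ ≤ ‖T (x + t • e)‖) : ‖T e‖ ≤ ‖T (x + e)‖ := by
  have horth : ⟪T x, T e⟫_ℝ = 0 :=
    inner_eq_zero_of_forall_norm_le_norm_add_smul fun t => by simpa using hmin t
  rw [← pow_le_pow_iff_left₀ (norm_nonneg _) (norm_nonneg _) two_ne_zero, map_add,
    norm_add_sq_real, horth]
  nlinarith [sq_nonneg ‖T x‖]

end FirstOrder

theorem mem_orthogonal_span_range_iff {𝕜 E ι : Type*} [RCLike 𝕜] [NormedAddCommGroup E]
    [InnerProductSpace 𝕜 E] (w : ι → E) (e : E) :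
    e ∈ (Submodule.span 𝕜 (Set.range w))ᗮ ↔ ∀ i, ⟪w i, e⟫_𝕜 = 0 := by
  rw [← Submodule.span_singleton_le_iff_mem, ← Submodule.isOrtho_iff_le, Submodule.isOrtho_comm,
    Submodule.isOrtho_iff_le, Submodule.span_le, Set.range_subset_iff]
  simp only [SetLike.mem_coe, Submodule.mem_orthogonal_singleton_iff_inner_left]

section InfSup

variable {V : Type*} [NormedAddCommGroup V] [InnerProductSpace ℝ V]

/-- The inf-sup constant `β(K, W)`; it is `sInf ∅ = 0` when `K = ⊥`. -/
noncomputable def infSupConstant (K W : Submodule ℝ V) [W.HasOrthogonalProjection] : ℝ :=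
  sInf {r : ℝ | ∃ v ∈ K, v ≠ 0 ∧ r = ‖W.starProjection v‖ / ‖v‖}

variable {K W : Submodule ℝ V} [W.HasOrthogonalProjection]

theorem infSupConstant_le_div {v : V} (hv : v ∈ K) (hv0 : v ≠ 0) :
    infSupConstant K W ≤ ‖W.starProjection v‖ / ‖v‖ := by
  refine csInf_le ⟨0, ?_⟩ ⟨v, hv, hv0, rfl⟩
  rintro r ⟨v, -, -, rfl⟩
  positivity

theorem infSupConstant_le_one : infSupConstant K W ≤ 1 := by
  rcases Set.eq_empty_or_nonempty {r : ℝ | ∃ v ∈ K, v ≠ 0 ∧ r = ‖W.starProjection v‖ / ‖v‖}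
    with hS | ⟨r, v, hv, hv0, rfl⟩
  · rw [infSupConstant, hS, Real.sInf_empty]
    exact zero_le_one
  · exact (infSupConstant_le_div hv hv0).trans <|
      (div_le_one (norm_pos_iff.2 hv0)).2 (W.norm_starProjection_apply_le v)

theorem infSupConstant_mul_norm_le {v : V} (hv : v ∈ K) :
    infSupConstant K W * ‖v‖ ≤ ‖W.starProjection v‖ := by
  rcases eq_or_ne v 0 with rfl | hv0
  · simp
  · exact (le_div_iff₀ (norm_pos_iff.2 hv0)).1 (infSupConstant_le_div hv hv0)

theorem norm_sq_starProjection_orthogonal_le {β : ℝ} (hβ : 0 ≤ β)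
    (hKW : ∀ v ∈ K, β * ‖v‖ ≤ ‖W.starProjection v‖) {v : V} (hv : v ∈ K) :
    ‖Wᗮ.starProjection v‖ ^ 2 ≤ (1 - β ^ 2) * ‖v‖ ^ 2 := by
  have hproj : (β * ‖v‖) ^ 2 ≤ ‖W.starProjection v‖ ^ 2 := by
    gcongr
    exact hKW v hv
  have := W.norm_sq_eq_add_norm_sq_starProjection v
  nlinarith

theorem norm_sq_starProjection_le_of_mem_orthogonal [K.HasOrthogonalProjection] {β : ℝ}
    (hβ : 0 ≤ β) (hβ1 : β ≤ 1) (hKW : ∀ v ∈ K, β * ‖v‖ ≤ ‖W.starProjection v‖) {e : V}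
    (he : e ∈ Wᗮ) : ‖K.starProjection e‖ ^ 2 ≤ (1 - β ^ 2) * ‖e‖ ^ 2 := by
  set v := K.starProjection e
  -- `Π_W v` is invisible to `e ∈ Wᗮ`, so only `Π_{Wᗮ} v` contributes to `‖v‖² = ⟪v, e⟫`.
  have hv : ‖v‖ ^ 2 = ⟪Wᗮ.starProjection v, e⟫_ℝ := by
    rw [Submodule.inner_starProjection_left_eq_right, Submodule.starProjection_eq_self_iff.2 he]
    simpa using (K.re_inner_starProjection_eq_normSq e).symm
  have hcs : (‖v‖ ^ 2) ^ 2 ≤ ‖Wᗮ.starProjection v‖ ^ 2 * ‖e‖ ^ 2 := by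
    rw [hv, ← mul_pow]
    exact sq_le_sq' (neg_le_of_abs_le (abs_real_inner_le_norm _ _)) (real_inner_le_norm _ _)
  have hperp := norm_sq_starProjection_orthogonal_le hβ hKW (K.starProjection_apply_mem e)
  rcases (sq_nonneg ‖v‖).eq_or_lt with hv0 | hvpos
  · rw [← hv0]
    have : 0 ≤ 1 - β ^ 2 := by nlinarith
    positivity
  · refine le_of_mul_le_mul_left ?_ hvpos
    nlinarith

theorem mul_norm_le_norm_starProjection_orthogonal [K.HasOrthogonalProjection] {β : ℝ}
    (hβ : 0 ≤ β) (hβ1 : β ≤ 1) (hKW : ∀ v ∈ K, β * ‖v‖ ≤ ‖W.starProjection v‖) {e : V}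
    (he : e ∈ Wᗮ) : β * ‖e‖ ≤ ‖Kᗮ.starProjection e‖ := by
  rw [← pow_le_pow_iff_left₀ (by positivity) (norm_nonneg _) two_ne_zero]
  have := norm_sq_starProjection_le_of_mem_orthogonal hβ hβ1 hKW he
  have := K.norm_sq_eq_add_norm_sq_starProjection e
  nlinarith

end InfSup

theorem pbdw_manifold_error_bound_general
    {V : Type*} [NormedAddCommGroup V] [InnerProductSpace ℝ V] [FiniteDimensional ℝ V]
    {m : ℕ} (w : Fin m → V)
    (W : Submodule ℝ V) (hW : W = Submodule.span ℝ (Set.range w))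
    (Vn : Submodule ℝ V)
    (β : ℝ)
    (hβ : β = sInf {r : ℝ | ∃ v ∈ Vn, v ≠ 0 ∧ r = ‖(Submodule.orthogonalProjectionOnto W v : V)‖ / ‖v‖})
    (hβpos : 0 < β)
    (M : Set V)
    (hbdd : BddAbove ((fun u => ‖u - (Submodule.orthogonalProjectionOnto Vn u : V)‖) '' M))
    (ε : ℝ)
    (hε : ε = sSup ((fun u => ‖u - (Submodule.orthogonalProjectionOnto Vn u : V)‖) '' M))
    (u : V) (hu : u ∈ M) (l : Fin m → ℝ) (hl : ∀ i, l i = ⟪w i, u⟫_ℝ)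
    (ustar : V)
    (hconstr : ∀ i, ⟪w i, ustar⟫_ℝ = l i)
    (hmin : ∀ u' : V, (∀ i, ⟪w i, u'⟫_ℝ = l i) →
      ‖(Submodule.orthogonalProjectionOnto Vnᗮ ustar : V)‖ ^ 2 ≤ ‖(Submodule.orthogonalProjectionOnto Vnᗮ u' : V)‖ ^ 2) :
    ‖u - ustar‖ ≤ β⁻¹ * ε := by
  simp only [Submodule.coe_orthogonalProjectionOnto_apply] at hβ hbdd hε hmin
  change β = infSupConstant Vn W at hβ
  set e := u - ustar
  have he_obs : ∀ i, ⟪w i, e⟫_ℝ = 0 := fun i => by rw [inner_sub_right, hconstr, hl, sub_self]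
  have he : e ∈ Wᗮ := hW ▸ (mem_orthogonal_span_range_iff w e).2 he_obs
  have hstable : β * ‖e‖ ≤ ‖Vnᗮ.starProjection e‖ :=
    mul_norm_le_norm_starProjection_orthogonal hβpos.le (hβ ▸ infSupConstant_le_one)
      (fun v hv => hβ ▸ infSupConstant_mul_norm_le hv) he
  have hoptimal (t : ℝ) : ‖Vnᗮ.starProjection ustar‖ ≤ ‖Vnᗮ.starProjection (ustar + t • e)‖ := by
    refine (pow_le_pow_iff_left₀ (norm_nonneg _) (norm_nonneg _) two_ne_zero).1 (hmin _ fun i => ?_)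
    rw [inner_add_right, real_inner_smul_right, he_obs, mul_zero, add_zero, hconstr]
  have hu_ε : ‖Vnᗮ.starProjection u‖ ≤ ε := by
    rw [Submodule.starProjection_orthogonal_val, hε]
    exact le_csSup hbdd ⟨u, hu, rfl⟩
  calc ‖u - ustar‖ ≤ β⁻¹ * ‖Vnᗮ.starProjection e‖ := (le_inv_mul_iff₀ hβpos).2 hstable
    _ ≤ β⁻¹ * ‖Vnᗮ.starProjection (ustar + e)‖ := by
      gcongr
      exact norm_map_le_norm_map_add_of_forall_norm_map_le_add_smul _ hoptimal
    _ ≤ β⁻¹ * ε := by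
      rw [add_sub_cancel]
      gcongr

/-- If the solution manifold `M` is approximated by `Vₙ` up to `ε(Vₙ) = sup_{u∈M} ‖u − Π_{Vₙ}u‖`
and `β(Vₙ, W) > 0`, then the PBDW reconstruction satisfies
`‖u − A(w)‖ ≤ β(Vₙ, W)⁻¹ ε(Vₙ)` for every `u ∈ M`. -/
theorem pbdw_manifold_error_bound
    {V : Type*} [NormedAddCommGroup V] [InnerProductSpace ℝ V] [FiniteDimensional ℝ V]
    {m n : ℕ} (w : Fin m → V) (hw : Orthonormal ℝ w)
    (W : Submodule ℝ V) (hW : W = Submodule.span ℝ (Set.range w))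
    (Vn : Submodule ℝ V) (hVn : Module.finrank ℝ Vn = n) (hnm : n ≤ m)
    (β : ℝ)
    (hβ : β = sInf {r : ℝ | ∃ v ∈ Vn, v ≠ 0 ∧ r = ‖(Submodule.orthogonalProjectionOnto W v : V)‖ / ‖v‖})
    (hβpos : 0 < β)
    (M : Set V)
    (hbdd : BddAbove ((fun u => ‖u - (Submodule.orthogonalProjectionOnto Vn u : V)‖) '' M))
    (ε : ℝ)
    (hε : ε = sSup ((fun u => ‖u - (Submodule.orthogonalProjectionOnto Vn u : V)‖) '' M))
    (u : V) (hu : u ∈ M) (l : Fin m → ℝ) (hl : ∀ i, l i = ⟪w i, u⟫_ℝ)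
    (ustar : V)
    (hconstr : ∀ i, ⟪w i, ustar⟫_ℝ = l i)
    (hmin : ∀ u' : V, (∀ i, ⟪w i, u'⟫_ℝ = l i) →
      ‖(Submodule.orthogonalProjectionOnto Vnᗮ ustar : V)‖ ^ 2 ≤ ‖(Submodule.orthogonalProjectionOnto Vnᗮ u' : V)‖ ^ 2) :
    ‖u - ustar‖ ≤ β⁻¹ * ε :=
  pbdw_manifold_error_bound_general w W hW Vn β hβ hβpos M hbdd ε hε u hu l hl ustar hconstr hmin
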